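/- arXiv:1911.01686 — 10 statements merged into one kernel-verified Lean document; each statement's English description precedes it below -/
import Mathlib

section
/- Let σ < 0 and 0 < δt < Δt ≤ ΔT. Then the parameters satisfy: 0 < β < 1, 0 < δβ < β, γ > 0, and δγ < 0. -/
/-- `β_τ = (1 - σ τ)^(-ΔT/τ)` (real exponent). -/
noncomputable def betaF (σ ΔT τ : ℝ) : ℝ := (1 - σ * τ) ^ (-(ΔT / τ))

/-- `γ_τ = (β_τ² - 1)/(σ (2 - σ τ))`. -/
noncomputable def gammaF (σ ΔT τ : ℝ) : ℝ := ((betaF σ ΔT τ) ^ 2 - 1) / (σ * (2 - σ * τ))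

/-!
Writing `β_τ = exp (-ΔT · log (1 - σ τ) / τ)`, the quotient `log (1 - σ τ) / τ` is the slope of
a secant of the strictly concave `log` through the point `1`, hence strictly decreasing in `τ`;
so `β_τ` is strictly increasing in `τ`, with values in `(0, 1)`. Then
`γ_τ = (1 - β_τ²) / (-σ (2 - σ τ))` has a positive, decreasing numerator and a positive,
increasing denominator, so it is positive and strictly decreasing.
-/

open Real Set

lemma one_lt_one_sub_mul {σ τ : ℝ} (hσ : σ < 0) (hτ : 0 < τ) : 1 < 1 - σ * τ := by
  nlinarith

lemma one_sub_mul_pos {σ τ : ℝ} (hσ : σ < 0) (hτ : 0 < τ) : 0 < 1 - σ * τ :=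
  zero_lt_one.trans (one_lt_one_sub_mul hσ hτ)

lemma log_one_sub_mul_div_strictAntiOn {σ : ℝ} (hσ : σ < 0) :
    StrictAntiOn (fun τ => log (1 - σ * τ) / τ) (Ioi 0) := by
  intro s (hs : 0 < s) t (ht : 0 < t) hst
  have hσs := one_lt_one_sub_mul hσ hs
  have hσt := one_lt_one_sub_mul hσ ht
  have secant := strictConcaveOn_log_Ioi.secant_strict_mono (mem_Ioi.2 one_pos)
    (one_sub_mul_pos hσ hs) (one_sub_mul_pos hσ ht) hσs.ne' hσt.ne' (by nlinarith)
  simp only [log_one, sub_zero, sub_sub_cancel_left, ← neg_mul, ← div_div] at secant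
  rw [div_right_comm, div_right_comm (log (1 - σ * s))] at secant
  exact (div_lt_div_iff_of_pos_right (neg_pos.2 hσ)).1 secant

section

variable {σ ΔT τ : ℝ}

lemma betaF_pos (h : 0 < 1 - σ * τ) : 0 < betaF σ ΔT τ :=
  rpow_pos_of_pos h _

lemma betaF_lt_one (hσ : σ < 0) (hτ : 0 < τ) (hΔT : 0 < ΔT) : betaF σ ΔT τ < 1 :=
  rpow_lt_one_of_one_lt_of_neg (one_lt_one_sub_mul hσ hτ) (neg_neg_of_pos (div_pos hΔT hτ))

lemma betaF_eq_exp (h : 0 < 1 - σ * τ) :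
    betaF σ ΔT τ = exp (-ΔT * (log (1 - σ * τ) / τ)) := by
  rw [betaF, rpow_def_of_pos h]
  ring_nf

lemma betaF_strictMonoOn (hσ : σ < 0) (hΔT : 0 < ΔT) : StrictMonoOn (betaF σ ΔT) (Ioi 0) := by
  intro s (hs : 0 < s) t (ht : 0 < t) hst
  rw [betaF_eq_exp (one_sub_mul_pos hσ hs), betaF_eq_exp (one_sub_mul_pos hσ ht)]
  exact exp_lt_exp.2 <| mul_lt_mul_of_neg_left
    (log_one_sub_mul_div_strictAntiOn hσ hs ht hst) (neg_neg_of_pos hΔT)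

lemma gammaF_eq : gammaF σ ΔT τ = (1 - betaF σ ΔT τ ^ 2) / (-σ * (2 - σ * τ)) := by
  rw [gammaF, ← neg_div_neg_eq, neg_sub, neg_mul]

lemma one_sub_betaF_sq_pos (hσ : σ < 0) (hτ : 0 < τ) (hΔT : 0 < ΔT) :
    0 < 1 - betaF σ ΔT τ ^ 2 :=
  sub_pos.2 <| pow_lt_one₀ (betaF_pos (one_sub_mul_pos hσ hτ)).le
    (betaF_lt_one hσ hτ hΔT) two_ne_zero

lemma gammaF_pos (hσ : σ < 0) (hτ : 0 < τ) (hΔT : 0 < ΔT) : 0 < gammaF σ ΔT τ := by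
  rw [gammaF_eq]
  exact div_pos (one_sub_betaF_sq_pos hσ hτ hΔT)
    (mul_pos (neg_pos.2 hσ) (by linarith [one_lt_one_sub_mul hσ hτ]))

lemma gammaF_strictAntiOn (hσ : σ < 0) (hΔT : 0 < ΔT) :
    StrictAntiOn (gammaF σ ΔT) (Ioi 0) := by
  intro s (hs : 0 < s) t (ht : 0 < t) hst
  rw [gammaF_eq, gammaF_eq]
  have hβ := betaF_strictMonoOn hσ hΔT hs ht hst
  have hβs := betaF_pos (ΔT := ΔT) (one_sub_mul_pos hσ hs)
  have hden : -σ * (2 - σ * s) ≤ -σ * (2 - σ * t) := by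
    nlinarith [mul_pos (mul_pos_of_neg_of_neg hσ hσ) (sub_pos.2 hst)]
  exact div_lt_div₀ (sub_lt_sub_left (pow_lt_pow_left₀ hβ hβs.le two_ne_zero) 1) hden
    (one_sub_betaF_sq_pos hσ hs hΔT).le
    (mul_pos (neg_pos.2 hσ) (by linarith [one_lt_one_sub_mul hσ hs]))

end

theorem sign_of_parameters (σ δt Δt ΔT : ℝ) (hσ : σ < 0)
    (hδt : 0 < δt) (hδtΔt : δt < Δt) (hΔtΔT : Δt ≤ ΔT) :
    0 < betaF σ ΔT Δt ∧ betaF σ ΔT Δt < 1 ∧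
    0 < betaF σ ΔT Δt - betaF σ ΔT δt ∧
    betaF σ ΔT Δt - betaF σ ΔT δt < betaF σ ΔT Δt ∧
    0 < gammaF σ ΔT Δt ∧
    gammaF σ ΔT Δt - gammaF σ ΔT δt < 0 := by
  have hΔt : 0 < Δt := hδt.trans hδtΔt
  have hΔT : 0 < ΔT := hΔt.trans_le hΔtΔT
  have hβΔt := betaF_pos (ΔT := ΔT) (one_sub_mul_pos hσ hΔt)
  have hβδt := betaF_pos (ΔT := ΔT) (one_sub_mul_pos hσ hδt)
  exact ⟨hβΔt, betaF_lt_one hσ hΔt hΔT,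
    sub_pos.2 (betaF_strictMonoOn hσ hΔT hδt hΔt hδtΔt), sub_lt_self _ hβδt,
    gammaF_pos hσ hΔt hΔT, sub_neg.2 (gammaF_strictAntiOn hσ hΔT hδt hΔt hδtΔt)⟩
end

section
/- Let σ < 0 and 0 < δt < Δt ≤ ΔT. Then the constant C := β + γ·δβ/|δγ| satisfies C < 1. -/
open Real Set

theorem two_mul_log_le_sub_inv {y : ℝ} (hy : 1 ≤ y) : 2 * log y ≤ y - y⁻¹ := by
  have h := self_le_sinh_iff.2 (log_nonneg hy)
  rw [sinh_log (by linarith)] at h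
  linarith

/-- In terms of `y = 1 - σ τ` and `K = -σ ΔT`, `β_τ = powDecay K y = y ^ (-K / (y - 1))`. -/
noncomputable def powDecay (K y : ℝ) : ℝ := exp (-(K * log y / (y - 1)))

theorem betaF_eq_powDecay (ΔT : ℝ) {σ τ : ℝ} (hσ : σ ≠ 0) (hy : 0 < 1 - σ * τ) :
    betaF σ ΔT τ = powDecay (-σ * ΔT) (1 - σ * τ) := by
  rw [betaF, powDecay, rpow_def_of_pos hy, show 1 - σ * τ - 1 = -σ * τ by ring, mul_assoc,
    mul_div_mul_left _ _ (neg_ne_zero.2 hσ)]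
  ring_nf

theorem hasDerivAt_powDecay (K : ℝ) {y : ℝ} (hy : 1 < y) :
    HasDerivAt (powDecay K)
      (powDecay K y * (K * (log y - 1 + y⁻¹) / (y - 1) ^ 2)) y := by
  have hy₀ : y ≠ 0 := by positivity
  have hy₁ : y - 1 ≠ 0 := sub_ne_zero.2 hy.ne'
  have h : HasDerivAt (fun y => -(K * log y / (y - 1)))
      (-((K * y⁻¹ * (y - 1) - K * log y * 1) / (y - 1) ^ 2)) y :=
    (((hasDerivAt_log hy₀).const_mul K).div ((hasDerivAt_id' y).sub_const 1) hy₁).neg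
  exact h.exp.congr_deriv (by rw [powDecay]; field_simp; ring)

theorem powDecay_lt_one {K y : ℝ} (hK : 0 < K) (hy : 1 < y) : powDecay K y < 1 := by
  have : 0 < K * log y / (y - 1) := div_pos (mul_pos hK (log_pos hy)) (by linarith)
  exact exp_lt_one_iff.2 (by linarith)

theorem strictMonoOn_powDecay {K : ℝ} (hK : 0 < K) : StrictMonoOn (powDecay K) (Ioi 1) := by
  refine strictMonoOn_of_deriv_pos (convex_Ioi 1)
    (fun y hy => (hasDerivAt_powDecay K hy).continuousAt.continuousWithinAt) fun y hy => ?_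
  rw [interior_Ioi, mem_Ioi] at hy
  rw [(hasDerivAt_powDecay K hy).deriv]
  have hlog : 0 < log y - 1 + y⁻¹ := by
    have h := log_lt_sub_one_of_pos (inv_pos.2 (zero_lt_one.trans hy)) (inv_ne_one.2 hy.ne')
    rw [log_inv] at h
    linarith
  have : 0 < powDecay K y := exp_pos _
  have : 0 < (y - 1) ^ 2 := by nlinarith
  positivity

theorem mul_exp_neg_lt_one (u : ℝ) : u * exp (-u) < 1 := by
  rw [exp_neg, ← div_eq_mul_inv, div_lt_one (exp_pos u)]
  linarith [add_one_le_exp u]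

theorem powDecay_deriv_mul_lt_one {K y : ℝ} (hK : 0 ≤ K) (hy : 1 < y) :
    powDecay K y * (K * (log y - 1 + y⁻¹) / (y - 1) ^ 2) * (1 + y) < 1 := by
  have hy₁ : 0 < y - 1 := by linarith
  have htrap : (1 + y) * (log y - 1 + y⁻¹) ≤ (y - 1) * log y := by
    have h := two_mul_log_le_sub_inv hy.le
    have : (1 + y) * (log y - 1 + y⁻¹) = (1 + y) * log y - (y - y⁻¹) := by
      field_simp; ring
    linarith
  calc powDecay K y * (K * (log y - 1 + y⁻¹) / (y - 1) ^ 2) * (1 + y)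
      = powDecay K y * K * ((1 + y) * (log y - 1 + y⁻¹)) / (y - 1) ^ 2 := by ring
    _ ≤ powDecay K y * K * ((y - 1) * log y) / (y - 1) ^ 2 := by
        have : 0 ≤ powDecay K y := (exp_pos _).le
        gcongr
    _ = K * log y / (y - 1) * exp (-(K * log y / (y - 1))) := by rw [powDecay]; field_simp
    _ < 1 := mul_exp_neg_lt_one _

theorem strictAntiOn_one_add_powDecay_div {K : ℝ} (hK : 0 ≤ K) :
    StrictAntiOn (fun y => (1 + powDecay K y) / (1 + y)) (Ioi 1) := by
  have hderiv : ∀ y ∈ Ioi (1 : ℝ), HasDerivAt (fun y => (1 + powDecay K y) / (1 + y))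
      ((powDecay K y * (K * (log y - 1 + y⁻¹) / (y - 1) ^ 2) * (1 + y) - (1 + powDecay K y) * 1)
        / (1 + y) ^ 2) y := fun y hy =>
    ((hasDerivAt_powDecay K hy).const_add 1).div ((hasDerivAt_id y).const_add 1)
      (by linarith [mem_Ioi.1 hy] : (0:ℝ) < 1 + y).ne'
  refine strictAntiOn_of_deriv_neg (convex_Ioi 1)
    (fun y hy => (hderiv y hy).continuousAt.continuousWithinAt) fun y hy => ?_
  rw [interior_Ioi] at hy
  rw [(hderiv y hy).deriv]
  have := powDecay_deriv_mul_lt_one hK hy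
  have : 0 < powDecay K y := exp_pos _
  exact div_neg_of_neg_of_pos (by linarith) (by nlinarith [mem_Ioi.1 hy])

theorem add_mul_div_abs_sub_lt_one {b₁ b₂ D₁ D₂ γ₁ γ₂ : ℝ} (hb₁ : -1 ≤ b₁) (hb : b₁ ≤ b₂)
    (hb₂ : b₂ < 1) (hD₁ : 0 < D₁) (hD₂ : 0 < D₂) (hkey : (1 + b₂) * D₁ < (1 + b₁) * D₂)
    (hγ₁ : γ₁ * D₁ = 1 - b₁ ^ 2) (hγ₂ : γ₂ * D₂ = 1 - b₂ ^ 2) :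
    b₂ + γ₂ * (b₂ - b₁) / |γ₂ - γ₁| < 1 := by
  have hgap : 0 < (1 + b₁) * D₂ - (1 + b₂) * D₁ := by linarith
  have hD : 0 < D₁ * D₂ := mul_pos hD₁ hD₂
  have hγ : 0 < γ₁ - γ₂ := by
    refine pos_of_mul_pos_left (b := D₁ * D₂) ?_ hD.le
    have : (γ₁ - γ₂) * (D₁ * D₂)
        = (1 - b₁) * ((1 + b₁) * D₂ - (1 + b₂) * D₁) + (1 + b₂) * D₁ * (b₂ - b₁) := by
      linear_combination D₂ * hγ₁ - D₁ * hγ₂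
    rw [this]
    exact add_pos_of_pos_of_nonneg (mul_pos (by linarith) hgap)
      (mul_nonneg (mul_nonneg (by linarith) hD₁.le) (sub_nonneg.2 hb))
  have hmain : γ₂ * (b₂ - b₁) < (1 - b₂) * (γ₁ - γ₂) := by
    refine sub_pos.1 (pos_of_mul_pos_left (b := D₁ * D₂) ?_ hD.le)
    have : ((1 - b₂) * (γ₁ - γ₂) - γ₂ * (b₂ - b₁)) * (D₁ * D₂)
        = (1 - b₂) * (1 - b₁) * ((1 + b₁) * D₂ - (1 + b₂) * D₁) := by
      linear_combination (1 - b₂) * D₂ * hγ₁ - (1 - b₁) * D₁ * hγ₂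
    rw [this]
    exact mul_pos (mul_pos (by linarith) (by linarith)) hgap
  rw [abs_sub_comm, abs_of_pos hγ]
  linarith [(div_lt_iff₀ hγ).2 hmain]

theorem gammaF_mul_eq_one_sub_betaF_sq (σ ΔT τ : ℝ) (h : σ * (2 - σ * τ) ≠ 0) :
    gammaF σ ΔT τ * (-σ * (2 - σ * τ)) = 1 - betaF σ ΔT τ ^ 2 := by
  rw [gammaF, div_mul_eq_mul_div, div_eq_iff h]
  ring

theorem constant_C_lt_one (σ δt Δt ΔT : ℝ) (hσ : σ < 0)
    (hδt : 0 < δt) (hδtΔt : δt < Δt) (hΔtΔT : Δt ≤ ΔT) :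
    betaF σ ΔT Δt +
      gammaF σ ΔT Δt * (betaF σ ΔT Δt - betaF σ ΔT δt) /
        |gammaF σ ΔT Δt - gammaF σ ΔT δt| < 1 := by
  have hc : 0 < -σ := neg_pos.2 hσ
  have hK : 0 < -σ * ΔT := mul_pos hc (hδt.trans hδtΔt |>.trans_le hΔtΔT)
  have hy₁ : 1 < 1 - σ * δt := by nlinarith
  have hy₁₂ : 1 - σ * δt < 1 - σ * Δt := by nlinarith
  have hy₂ : 1 < 1 - σ * Δt := hy₁.trans hy₁₂
  have hβ₁ := betaF_eq_powDecay ΔT hσ.ne (zero_lt_one.trans hy₁)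
  have hβ₂ := betaF_eq_powDecay ΔT hσ.ne (zero_lt_one.trans hy₂)
  have hkey := strictAntiOn_one_add_powDecay_div hK.le hy₁ hy₂ hy₁₂
  rw [div_lt_div_iff₀ (by linarith) (by linarith), ← hβ₁, ← hβ₂] at hkey
  refine add_mul_div_abs_sub_lt_one ?_ ?_ ?_ ?_ ?_ ?_
    (gammaF_mul_eq_one_sub_betaF_sq σ ΔT δt (by nlinarith))
    (gammaF_mul_eq_one_sub_betaF_sq σ ΔT Δt (by nlinarith))
  · rw [hβ₁]; exact (neg_one_lt_zero.trans (exp_pos _)).le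
  · rw [hβ₁, hβ₂]; exact (strictMonoOn_powDecay hK hy₁ hy₂ hy₁₂).le
  · rw [hβ₂]; exact powDecay_lt_one hK hy₂
  · nlinarith
  · nlinarith
  · linear_combination (-σ) * hkey
end

section
/- Let σ < 0 and 0 < δt < Δt ≤ ΔT. Then |δγ|/γ ≤ 1.58·|σ|·(Δt − δt). -/
open Real Set

noncomputable def logSlope (x : ℝ) : ℝ := log (1 + x) / x

lemma hasDerivAt_logSlope {x : ℝ} (hx : 0 < x) :
    HasDerivAt logSlope ((x / (1 + x) - log (1 + x)) / x ^ 2) x := by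
  have h1x : 1 + x ≠ 0 := by positivity
  have h : HasDerivAt (fun y => log (1 + y) / y) _ x :=
    (((hasDerivAt_id' x).const_add 1).log h1x).div (hasDerivAt_id' x) hx.ne'
  exact h.congr_deriv (by field_simp)

lemma logSlope_pos {x : ℝ} (hx : 0 < x) : 0 < logSlope x :=
  div_pos (log_pos (by linarith)) hx

lemma antitoneOn_logSlope : AntitoneOn logSlope (Ioi 0) := by
  refine antitoneOn_of_hasDerivWithinAt_nonpos (convex_Ioi 0)
    (fun x hx => (hasDerivAt_logSlope hx).continuousAt.continuousWithinAt)
    (fun x hx => (hasDerivAt_logSlope (interior_subset hx)).hasDerivWithinAt) ?_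
  intro x hx
  rw [interior_Ioi] at hx
  have hx : (0 : ℝ) < x := hx
  have hlog := one_sub_inv_le_log_of_pos (by linarith : (0 : ℝ) < 1 + x)
  have hsub : x / (1 + x) = 1 - (1 + x)⁻¹ := by field_simp; ring
  exact div_nonpos_of_nonpos_of_nonneg (by linarith) (by positivity)

lemma monotoneOn_logSlope_add_self : MonotoneOn (fun x => logSlope x + x) (Ioi 0) := by
  refine monotoneOn_of_hasDerivWithinAt_nonneg (convex_Ioi 0)
    (fun x hx => ((hasDerivAt_logSlope hx).add (hasDerivAt_id x)).continuousAt.continuousWithinAt)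
    (fun x hx => ((hasDerivAt_logSlope (interior_subset hx)).add
      (hasDerivAt_id x)).hasDerivWithinAt) ?_
  intro x hx
  rw [interior_Ioi] at hx
  have hx : (0 : ℝ) < x := hx
  have hlog := log_le_sub_one_of_pos (by linarith : (0 : ℝ) < 1 + x)
  have hfrac : x - x ^ 2 ≤ x / (1 + x) := by
    rw [le_div_iff₀ (by linarith)]; nlinarith [sq_nonneg x]
  rw [← neg_le_iff_add_nonneg, le_div_iff₀ (by positivity)]
  linarith

/-- `exp (-(2 * W * logSlope x))` is `β_τ²` in the rescaled steps `x = |σ| τ`, `W = |σ| ΔT`. -/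
noncomputable def scaledGamma (W x : ℝ) : ℝ := (1 - exp (-(2 * W * logSlope x))) / (2 + x)

lemma gammaF_eq_scaledGamma {σ ΔT τ : ℝ} (hσ : σ < 0) (hτ : 0 < τ) :
    gammaF σ ΔT τ = scaledGamma (-σ * ΔT) (-σ * τ) / -σ := by
  have hστ : 0 < 1 + -σ * τ := by nlinarith
  have hσ0 : σ ≠ 0 := hσ.ne
  have hbeta : betaF σ ΔT τ ^ 2 = exp (-(2 * (-σ * ΔT) * logSlope (-σ * τ))) := by
    rw [betaF, ← rpow_natCast, ← rpow_mul (by linarith), rpow_def_of_pos (by linarith), logSlope,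
      show 1 - σ * τ = 1 + -σ * τ by ring]
    congr 1
    field_simp
    ring
  rw [gammaF, hbeta, scaledGamma, div_div, ← neg_div_neg_eq]
  congr 1 <;> ring

lemma one_add_mul_two_add_le_exp {x W : ℝ} (hx : 0 < x) (hxW : x ≤ W) :
    1 + W * (2 + x) ≤ exp (2 * W * logSlope x) := by
  have hbern := one_add_mul_self_le_rpow_one_add (s := x * (2 + x)) (by nlinarith)
    ((one_le_div hx).2 hxW)
  have hbase : 1 + x * (2 + x) = (1 + x) ^ 2 := by ring
  rw [hbase, rpow_def_of_pos (by positivity), log_pow] at hbern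
  calc 1 + W * (2 + x) = 1 + W / x * (x * (2 + x)) := by field_simp
    _ ≤ exp (2 * log (1 + x) * (W / x)) := mod_cast hbern
    _ = exp (2 * W * logSlope x) := by rw [logSlope]; ring_nf

lemma scaledGamma_pos {x W : ℝ} (hx : 0 < x) (hW : 0 < W) : 0 < scaledGamma W x := by
  have : exp (-(2 * W * logSlope x)) < 1 :=
    exp_lt_one_iff.2 (by nlinarith [logSlope_pos hx])
  exact div_pos (by linarith) (by linarith)

lemma scaledGamma_le_of_le {a b W : ℝ} (ha : 0 < a) (hab : a ≤ b) (hW : 0 ≤ W) :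
    scaledGamma W b ≤ scaledGamma W a := by
  have hg : logSlope b ≤ logSlope a := antitoneOn_logSlope ha (ha.trans_le hab) hab
  have hEb : exp (-(2 * W * logSlope b)) ≤ 1 :=
    exp_le_one_iff.2 (by nlinarith [logSlope_pos (ha.trans_le hab)])
  have hE : exp (-(2 * W * logSlope a)) ≤ exp (-(2 * W * logSlope b)) :=
    exp_le_exp.2 (by nlinarith)
  calc scaledGamma W b ≤ (1 - exp (-(2 * W * logSlope b))) / (2 + a) :=
        div_le_div_of_nonneg_left (by linarith) (by linarith) (by linarith)
    _ ≤ scaledGamma W a := div_le_div_of_nonneg_right (by linarith) (by linarith)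

lemma scaledGamma_sub_le {a b W : ℝ} (ha : 0 < a) (hab : a ≤ b) (hbW : b ≤ W) :
    scaledGamma W a - scaledGamma W b ≤ 3 / 2 * (b - a) * scaledGamma W b := by
  have hb : 0 < b := ha.trans_le hab
  have hW : 0 ≤ W := hb.le.trans hbW
  rw [scaledGamma, scaledGamma, div_sub_div _ _ (by positivity) (by positivity),
    div_le_iff₀ (by positivity)]
  set Ea := exp (-(2 * W * logSlope a)) with hEa_def
  set Eb := exp (-(2 * W * logSlope b)) with hEb_def
  have hEb0 : 0 < Eb := exp_pos _
  have hslope : logSlope a - logSlope b ≤ b - a := by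
    linarith [monotoneOn_logSlope_add_self ha hb hab]
  have hEa : Ea = Eb * exp (-(2 * W * (logSlope a - logSlope b))) := by
    rw [hEa_def, hEb_def, ← exp_add]; congr 1; ring
  have hdiff : Eb - Ea ≤ 2 * W * (b - a) * Eb := by
    have hexp := add_one_le_exp (-(2 * W * (logSlope a - logSlope b)))
    have h1 : Eb - Ea ≤ Eb * (2 * W * (logSlope a - logSlope b)) := by
      rw [hEa]; nlinarith [mul_le_mul_of_nonneg_left hexp hEb0.le]
    have h2 : 2 * W * (logSlope a - logSlope b) ≤ 2 * W * (b - a) :=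
      mul_le_mul_of_nonneg_left hslope (by positivity)
    nlinarith [mul_le_mul_of_nonneg_left h2 hEb0.le]
  have hEb : Eb * (1 + W * (2 + b)) ≤ 1 := by
    have hinv : Eb * exp (2 * W * logSlope b) = 1 := by rw [hEb_def, ← exp_add]; simp
    nlinarith [mul_le_mul_of_nonneg_left (one_add_mul_two_add_le_exp hb hbW) hEb0.le]
  have hba : 0 ≤ b - a := by linarith
  have h1 : (Eb - Ea) * (2 + b) ≤ 2 * (b - a) * (1 - Eb) := by
    nlinarith [mul_le_mul_of_nonneg_right hdiff (by linarith : (0 : ℝ) ≤ 2 + b),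
      mul_le_mul_of_nonneg_left hEb (by positivity : (0 : ℝ) ≤ 2 * (b - a))]
  have h2 : 0 ≤ (b - a) * (1 - Eb) * a := by
    have : Eb ≤ 1 := by nlinarith [mul_nonneg hEb0.le (by positivity : 0 ≤ W * (2 + b))]
    have : 0 ≤ 1 - Eb := by linarith
    positivity
  rw [show 3 / 2 * (b - a) * ((1 - Eb) / (2 + b)) * ((2 + a) * (2 + b)) =
    3 / 2 * (b - a) * (1 - Eb) * (2 + a) by field_simp]
  linarith

lemma abs_scaledGamma_sub_div_le {a b W : ℝ} (ha : 0 < a) (hab : a ≤ b) (hbW : b ≤ W) :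
    |scaledGamma W b - scaledGamma W a| / scaledGamma W b ≤ 3 / 2 * (b - a) := by
  have hpos := scaledGamma_pos (ha.trans_le hab) (ha.trans_le (hab.trans hbW))
  rw [abs_sub_comm, abs_of_nonneg (sub_nonneg.2 (scaledGamma_le_of_le ha hab (by linarith))),
    div_le_iff₀ hpos]
  exact scaledGamma_sub_le ha hab hbW

theorem dg_over_g_bound (σ δt Δt ΔT : ℝ) (hσ : σ < 0)
    (hδt : 0 < δt) (hδtΔt : δt < Δt) (hΔtΔT : Δt ≤ ΔT) :
    |gammaF σ ΔT Δt - gammaF σ ΔT δt| / gammaF σ ΔT Δt ≤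
      1.58 * |σ| * (Δt - δt) := by
  have hs : 0 < -σ := neg_pos.2 hσ
  rw [gammaF_eq_scaledGamma hσ (hδt.trans hδtΔt), gammaF_eq_scaledGamma hσ hδt, ← sub_div,
    abs_div, abs_of_pos hs, div_div_div_cancel_right₀ hs.ne']
  calc _ ≤ 3 / 2 * (-σ * Δt - -σ * δt) :=
        abs_scaledGamma_sub_div_le (mul_pos hs hδt)
          (mul_le_mul_of_nonneg_left hδtΔt.le hs.le) (mul_le_mul_of_nonneg_left hΔtΔT hs.le)
    _ ≤ 1.58 * |σ| * (Δt - δt) := by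
        rw [abs_of_neg hσ]
        nlinarith [mul_pos hs (sub_pos.2 hδtΔt)]
end

section
/- Let σ < 0 and 0 < δt < Δt ≤ ΔT. Then δβ/(1 − β) ≤ 0.3. -/
set_option maxHeartbeats 2000000

lemma tangent_aux (c m r : ℝ) (hr : r ≤ Real.exp (-c)) (hr0 : 0 ≤ r) :
    r * (1 + c - m) ≤ Real.exp (-m) := by
  rcases le_or_gt (1 + c - m) 0 with h|h
  · have := Real.exp_pos (-m)
    nlinarith
  · have h1 : c - m + 1 ≤ Real.exp (c - m) := Real.add_one_le_exp _
    have h2 : Real.exp (-m) = Real.exp (-c) * Real.exp (c - m) := by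
      rw [← Real.exp_add]; ring_nf
    have h3 : (0:ℝ) < Real.exp (c - m) := Real.exp_pos _
    have h4 : (0:ℝ) < Real.exp (-c) := Real.exp_pos _
    calc r * (1 + c - m) ≤ Real.exp (-c) * (1 + c - m) := by nlinarith
      _ ≤ Real.exp (-c) * Real.exp (c - m) := by nlinarith
      _ = Real.exp (-m) := h2.symm

lemma exp_point1_le : Real.exp 0.1 ≤ 1.10518 := by
  have h := Real.exp_bound' (x := 0.1) (by norm_num) (by norm_num) (n := 4) (by norm_num)
  simp only [Finset.sum_range_succ, Finset.sum_range_zero, Nat.factorial] at h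
  norm_num at h
  linarith

lemma exp_point05_le : Real.exp 0.05 ≤ 1.051272 := by
  have h := Real.exp_bound' (x := 0.05) (by norm_num) (by norm_num) (n := 4) (by norm_num)
  simp only [Finset.sum_range_succ, Finset.sum_range_zero, Nat.factorial] at h
  norm_num at h
  linarith

lemma exp_neg_point1 : (1/1.10518 : ℝ) ≤ Real.exp (-0.1) := by
  rw [Real.exp_neg, one_div]
  exact inv_anti₀ (Real.exp_pos _) exp_point1_le

lemma exp_neg_point05 : (1/1.051272 : ℝ) ≤ Real.exp (-0.05) := by
  rw [Real.exp_neg, one_div]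
  exact inv_anti₀ (Real.exp_pos _) exp_point05_le

lemma exp_grid (k : ℕ) :
    (1/1.051272 : ℝ) * (1/1.10518)^k ≤ Real.exp (-(0.05 + (k:ℝ)/10)) := by
  have h1 : Real.exp (-(0.05 + (k:ℝ)/10)) = Real.exp (-0.05) * Real.exp (-0.1) ^ k := by
    rw [← Real.exp_nat_mul, ← Real.exp_add]
    congr 1
    ring
  rw [h1]
  have hp : ((1:ℝ)/1.10518)^k ≤ Real.exp (-0.1) ^ k :=
    pow_le_pow_left₀ (by norm_num) exp_neg_point1 k
  exact mul_le_mul exp_neg_point05 hp (by positivity) (Real.exp_pos _).le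

lemma key_ineq (m : ℝ) (hm : 0 ≤ m) : 1 - 0.3*m ≤ (1+m) * Real.exp (-m) := by
  rcases le_or_gt m 0.3 with h|h3lo'
  · have h1 : 1 - m ≤ Real.exp (-m) := by
      have := Real.add_one_le_exp (-m); linarith
    nlinarith [Real.exp_pos (-m)]
  rcases le_or_gt (10/3 : ℝ) m with h'|h'
  · nlinarith [Real.exp_pos (-m)]
  have h3lo : (3:ℝ)/10 < m := by norm_num at h3lo' ⊢; linarith
  rcases le_or_gt m ((4:ℝ)/10) with hub|h4lo
  · have hr : (7046701/10000000 : ℝ) ≤ Real.exp (-(0.05 + (3:ℕ)/10)) :=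
      le_trans (by norm_num) (exp_grid 3)
    have ht := tangent_aux (0.05 + (3:ℕ)/10) m (7046701/10000000) hr (by norm_num)
    have h3 : (1+m) * ((7046701/10000000:ℝ) * (1 + (0.05 + ((3:ℕ):ℝ)/10) - m)) ≤ (1+m) * Real.exp (-m) :=
      mul_le_mul_of_nonneg_left ht (by linarith)
    push_cast at h3
    nlinarith [h3, mul_nonneg (sub_nonneg.2 h3lo.le) (sub_nonneg.2 hub)]
  rcases le_or_gt m ((5:ℝ)/10) with hub|h5lo
  · have hr : (3188033/5000000 : ℝ) ≤ Real.exp (-(0.05 + (4:ℕ)/10)) :=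
      le_trans (by norm_num) (exp_grid 4)
    have ht := tangent_aux (0.05 + (4:ℕ)/10) m (3188033/5000000) hr (by norm_num)
    have h3 : (1+m) * ((3188033/5000000:ℝ) * (1 + (0.05 + ((4:ℕ):ℝ)/10) - m)) ≤ (1+m) * Real.exp (-m) :=
      mul_le_mul_of_nonneg_left ht (by linarith)
    push_cast at h3
    nlinarith [h3, mul_nonneg (sub_nonneg.2 h4lo.le) (sub_nonneg.2 hub)]
  rcases le_or_gt m ((6:ℝ)/10) with hub|h6lo
  · have hr : (721157/1250000 : ℝ) ≤ Real.exp (-(0.05 + (5:ℕ)/10)) :=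
      le_trans (by norm_num) (exp_grid 5)
    have ht := tangent_aux (0.05 + (5:ℕ)/10) m (721157/1250000) hr (by norm_num)
    have h3 : (1+m) * ((721157/1250000:ℝ) * (1 + (0.05 + ((5:ℕ):ℝ)/10) - m)) ≤ (1+m) * Real.exp (-m) :=
      mul_le_mul_of_nonneg_left ht (by linarith)
    push_cast at h3
    nlinarith [h3, mul_nonneg (sub_nonneg.2 h5lo.le) (sub_nonneg.2 hub)]
  rcases le_or_gt m ((7:ℝ)/10) with hub|h7lo
  · have hr : (1044039/2000000 : ℝ) ≤ Real.exp (-(0.05 + (6:ℕ)/10)) :=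
      le_trans (by norm_num) (exp_grid 6)
    have ht := tangent_aux (0.05 + (6:ℕ)/10) m (1044039/2000000) hr (by norm_num)
    have h3 : (1+m) * ((1044039/2000000:ℝ) * (1 + (0.05 + ((6:ℕ):ℝ)/10) - m)) ≤ (1+m) * Real.exp (-m) :=
      mul_le_mul_of_nonneg_left ht (by linarith)
    push_cast at h3
    nlinarith [h3, mul_nonneg (sub_nonneg.2 h6lo.le) (sub_nonneg.2 hub)]
  rcases le_or_gt m ((8:ℝ)/10) with hub|h8lo
  · have hr : (4723389/10000000 : ℝ) ≤ Real.exp (-(0.05 + (7:ℕ)/10)) :=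
      le_trans (by norm_num) (exp_grid 7)
    have ht := tangent_aux (0.05 + (7:ℕ)/10) m (4723389/10000000) hr (by norm_num)
    have h3 : (1+m) * ((4723389/10000000:ℝ) * (1 + (0.05 + ((7:ℕ):ℝ)/10) - m)) ≤ (1+m) * Real.exp (-m) :=
      mul_le_mul_of_nonneg_left ht (by linarith)
    push_cast at h3
    nlinarith [h3, mul_nonneg (sub_nonneg.2 h7lo.le) (sub_nonneg.2 hub)]
  rcases le_or_gt m ((9:ℝ)/10) with hub|h9lo
  · have hr : (534233/1250000 : ℝ) ≤ Real.exp (-(0.05 + (8:ℕ)/10)) :=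
      le_trans (by norm_num) (exp_grid 8)
    have ht := tangent_aux (0.05 + (8:ℕ)/10) m (534233/1250000) hr (by norm_num)
    have h3 : (1+m) * ((534233/1250000:ℝ) * (1 + (0.05 + ((8:ℕ):ℝ)/10) - m)) ≤ (1+m) * Real.exp (-m) :=
      mul_le_mul_of_nonneg_left ht (by linarith)
    push_cast at h3
    nlinarith [h3, mul_nonneg (sub_nonneg.2 h8lo.le) (sub_nonneg.2 hub)]
  rcases le_or_gt m ((10:ℝ)/10) with hub|h10lo
  · have hr : (48339/125000 : ℝ) ≤ Real.exp (-(0.05 + (9:ℕ)/10)) :=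
      le_trans (by norm_num) (exp_grid 9)
    have ht := tangent_aux (0.05 + (9:ℕ)/10) m (48339/125000) hr (by norm_num)
    have h3 : (1+m) * ((48339/125000:ℝ) * (1 + (0.05 + ((9:ℕ):ℝ)/10) - m)) ≤ (1+m) * Real.exp (-m) :=
      mul_le_mul_of_nonneg_left ht (by linarith)
    push_cast at h3
    nlinarith [h3, mul_nonneg (sub_nonneg.2 h9lo.le) (sub_nonneg.2 hub)]
  rcases le_or_gt m ((11:ℝ)/10) with hub|h11lo
  · have hr : (1749543/5000000 : ℝ) ≤ Real.exp (-(0.05 + (10:ℕ)/10)) :=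
      le_trans (by norm_num) (exp_grid 10)
    have ht := tangent_aux (0.05 + (10:ℕ)/10) m (1749543/5000000) hr (by norm_num)
    have h3 : (1+m) * ((1749543/5000000:ℝ) * (1 + (0.05 + ((10:ℕ):ℝ)/10) - m)) ≤ (1+m) * Real.exp (-m) :=
      mul_le_mul_of_nonneg_left ht (by linarith)
    push_cast at h3
    nlinarith [h3, mul_nonneg (sub_nonneg.2 h10lo.le) (sub_nonneg.2 hub)]
  rcases le_or_gt m ((12:ℝ)/10) with hub|h12lo
  · have hr : (1583039/5000000 : ℝ) ≤ Real.exp (-(0.05 + (11:ℕ)/10)) :=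
      le_trans (by norm_num) (exp_grid 11)
    have ht := tangent_aux (0.05 + (11:ℕ)/10) m (1583039/5000000) hr (by norm_num)
    have h3 : (1+m) * ((1583039/5000000:ℝ) * (1 + (0.05 + ((11:ℕ):ℝ)/10) - m)) ≤ (1+m) * Real.exp (-m) :=
      mul_le_mul_of_nonneg_left ht (by linarith)
    push_cast at h3
    nlinarith [h3, mul_nonneg (sub_nonneg.2 h11lo.le) (sub_nonneg.2 hub)]
  rcases le_or_gt m ((13:ℝ)/10) with hub|h13lo
  · have hr : (1432381/5000000 : ℝ) ≤ Real.exp (-(0.05 + (12:ℕ)/10)) :=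
      le_trans (by norm_num) (exp_grid 12)
    have ht := tangent_aux (0.05 + (12:ℕ)/10) m (1432381/5000000) hr (by norm_num)
    have h3 : (1+m) * ((1432381/5000000:ℝ) * (1 + (0.05 + ((12:ℕ):ℝ)/10) - m)) ≤ (1+m) * Real.exp (-m) :=
      mul_le_mul_of_nonneg_left ht (by linarith)
    push_cast at h3
    nlinarith [h3, mul_nonneg (sub_nonneg.2 h12lo.le) (sub_nonneg.2 hub)]
  rcases le_or_gt m ((14:ℝ)/10) with hub|h14lo
  · have hr : (2592123/10000000 : ℝ) ≤ Real.exp (-(0.05 + (13:ℕ)/10)) :=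
      le_trans (by norm_num) (exp_grid 13)
    have ht := tangent_aux (0.05 + (13:ℕ)/10) m (2592123/10000000) hr (by norm_num)
    have h3 : (1+m) * ((2592123/10000000:ℝ) * (1 + (0.05 + ((13:ℕ):ℝ)/10) - m)) ≤ (1+m) * Real.exp (-m) :=
      mul_le_mul_of_nonneg_left ht (by linarith)
    push_cast at h3
    nlinarith [h3, mul_nonneg (sub_nonneg.2 h13lo.le) (sub_nonneg.2 hub)]
  rcases le_or_gt m ((15:ℝ)/10) with hub|h15lo
  · have hr : (2345431/10000000 : ℝ) ≤ Real.exp (-(0.05 + (14:ℕ)/10)) :=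
      le_trans (by norm_num) (exp_grid 14)
    have ht := tangent_aux (0.05 + (14:ℕ)/10) m (2345431/10000000) hr (by norm_num)
    have h3 : (1+m) * ((2345431/10000000:ℝ) * (1 + (0.05 + ((14:ℕ):ℝ)/10) - m)) ≤ (1+m) * Real.exp (-m) :=
      mul_le_mul_of_nonneg_left ht (by linarith)
    push_cast at h3
    nlinarith [h3, mul_nonneg (sub_nonneg.2 h14lo.le) (sub_nonneg.2 hub)]
  rcases le_or_gt m ((16:ℝ)/10) with hub|h16lo
  · have hr : (265277/1250000 : ℝ) ≤ Real.exp (-(0.05 + (15:ℕ)/10)) :=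
      le_trans (by norm_num) (exp_grid 15)
    have ht := tangent_aux (0.05 + (15:ℕ)/10) m (265277/1250000) hr (by norm_num)
    have h3 : (1+m) * ((265277/1250000:ℝ) * (1 + (0.05 + ((15:ℕ):ℝ)/10) - m)) ≤ (1+m) * Real.exp (-m) :=
      mul_le_mul_of_nonneg_left ht (by linarith)
    push_cast at h3
    nlinarith [h3, mul_nonneg (sub_nonneg.2 h15lo.le) (sub_nonneg.2 hub)]
  rcases le_or_gt m ((17:ℝ)/10) with hub|h17lo
  · have hr : (480061/2500000 : ℝ) ≤ Real.exp (-(0.05 + (16:ℕ)/10)) :=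
      le_trans (by norm_num) (exp_grid 16)
    have ht := tangent_aux (0.05 + (16:ℕ)/10) m (480061/2500000) hr (by norm_num)
    have h3 : (1+m) * ((480061/2500000:ℝ) * (1 + (0.05 + ((16:ℕ):ℝ)/10) - m)) ≤ (1+m) * Real.exp (-m) :=
      mul_le_mul_of_nonneg_left ht (by linarith)
    push_cast at h3
    nlinarith [h3, mul_nonneg (sub_nonneg.2 h16lo.le) (sub_nonneg.2 hub)]
  rcases le_or_gt m ((18:ℝ)/10) with hub|h18lo
  · have hr : (347499/2000000 : ℝ) ≤ Real.exp (-(0.05 + (17:ℕ)/10)) :=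
      le_trans (by norm_num) (exp_grid 17)
    have ht := tangent_aux (0.05 + (17:ℕ)/10) m (347499/2000000) hr (by norm_num)
    have h3 : (1+m) * ((347499/2000000:ℝ) * (1 + (0.05 + ((17:ℕ):ℝ)/10) - m)) ≤ (1+m) * Real.exp (-m) :=
      mul_le_mul_of_nonneg_left ht (by linarith)
    push_cast at h3
    nlinarith [h3, mul_nonneg (sub_nonneg.2 h17lo.le) (sub_nonneg.2 hub)]
  rcases le_or_gt m ((19:ℝ)/10) with hub|h19lo
  · have hr : (1572137/10000000 : ℝ) ≤ Real.exp (-(0.05 + (18:ℕ)/10)) :=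
      le_trans (by norm_num) (exp_grid 18)
    have ht := tangent_aux (0.05 + (18:ℕ)/10) m (1572137/10000000) hr (by norm_num)
    have h3 : (1+m) * ((1572137/10000000:ℝ) * (1 + (0.05 + ((18:ℕ):ℝ)/10) - m)) ≤ (1+m) * Real.exp (-m) :=
      mul_le_mul_of_nonneg_left ht (by linarith)
    push_cast at h3
    nlinarith [h3, mul_nonneg (sub_nonneg.2 h18lo.le) (sub_nonneg.2 hub)]
  rcases le_or_gt m ((20:ℝ)/10) with hub|h20lo
  · have hr : (1422517/10000000 : ℝ) ≤ Real.exp (-(0.05 + (19:ℕ)/10)) :=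
      le_trans (by norm_num) (exp_grid 19)
    have ht := tangent_aux (0.05 + (19:ℕ)/10) m (1422517/10000000) hr (by norm_num)
    have h3 : (1+m) * ((1422517/10000000:ℝ) * (1 + (0.05 + ((19:ℕ):ℝ)/10) - m)) ≤ (1+m) * Real.exp (-m) :=
      mul_le_mul_of_nonneg_left ht (by linarith)
    push_cast at h3
    nlinarith [h3, mul_nonneg (sub_nonneg.2 h19lo.le) (sub_nonneg.2 hub)]
  rcases le_or_gt m ((21:ℝ)/10) with hub|h21lo
  · have hr : (40223/312500 : ℝ) ≤ Real.exp (-(0.05 + (20:ℕ)/10)) :=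
      le_trans (by norm_num) (exp_grid 20)
    have ht := tangent_aux (0.05 + (20:ℕ)/10) m (40223/312500) hr (by norm_num)
    have h3 : (1+m) * ((40223/312500:ℝ) * (1 + (0.05 + ((20:ℕ):ℝ)/10) - m)) ≤ (1+m) * Real.exp (-m) :=
      mul_le_mul_of_nonneg_left ht (by linarith)
    push_cast at h3
    nlinarith [h3, mul_nonneg (sub_nonneg.2 h20lo.le) (sub_nonneg.2 hub)]
  rcases le_or_gt m ((22:ℝ)/10) with hub|h22lo
  · have hr : (1164639/10000000 : ℝ) ≤ Real.exp (-(0.05 + (21:ℕ)/10)) :=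
      le_trans (by norm_num) (exp_grid 21)
    have ht := tangent_aux (0.05 + (21:ℕ)/10) m (1164639/10000000) hr (by norm_num)
    have h3 : (1+m) * ((1164639/10000000:ℝ) * (1 + (0.05 + ((21:ℕ):ℝ)/10) - m)) ≤ (1+m) * Real.exp (-m) :=
      mul_le_mul_of_nonneg_left ht (by linarith)
    push_cast at h3
    nlinarith [h3, mul_nonneg (sub_nonneg.2 h21lo.le) (sub_nonneg.2 hub)]
  rcases le_or_gt m ((23:ℝ)/10) with hub|h23lo
  · have hr : (5269/50000 : ℝ) ≤ Real.exp (-(0.05 + (22:ℕ)/10)) :=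
      le_trans (by norm_num) (exp_grid 22)
    have ht := tangent_aux (0.05 + (22:ℕ)/10) m (5269/50000) hr (by norm_num)
    have h3 : (1+m) * ((5269/50000:ℝ) * (1 + (0.05 + ((22:ℕ):ℝ)/10) - m)) ≤ (1+m) * Real.exp (-m) :=
      mul_le_mul_of_nonneg_left ht (by linarith)
    push_cast at h3
    nlinarith [h3, mul_nonneg (sub_nonneg.2 h22lo.le) (sub_nonneg.2 hub)]
  rcases le_or_gt m ((24:ℝ)/10) with hub|h24lo
  · have hr : (95351/1000000 : ℝ) ≤ Real.exp (-(0.05 + (23:ℕ)/10)) :=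
      le_trans (by norm_num) (exp_grid 23)
    have ht := tangent_aux (0.05 + (23:ℕ)/10) m (95351/1000000) hr (by norm_num)
    have h3 : (1+m) * ((95351/1000000:ℝ) * (1 + (0.05 + ((23:ℕ):ℝ)/10) - m)) ≤ (1+m) * Real.exp (-m) :=
      mul_le_mul_of_nonneg_left ht (by linarith)
    push_cast at h3
    nlinarith [h3, mul_nonneg (sub_nonneg.2 h23lo.le) (sub_nonneg.2 hub)]
  rcases le_or_gt m ((25:ℝ)/10) with hub|h25lo
  · have hr : (215691/2500000 : ℝ) ≤ Real.exp (-(0.05 + (24:ℕ)/10)) :=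
      le_trans (by norm_num) (exp_grid 24)
    have ht := tangent_aux (0.05 + (24:ℕ)/10) m (215691/2500000) hr (by norm_num)
    have h3 : (1+m) * ((215691/2500000:ℝ) * (1 + (0.05 + ((24:ℕ):ℝ)/10) - m)) ≤ (1+m) * Real.exp (-m) :=
      mul_le_mul_of_nonneg_left ht (by linarith)
    push_cast at h3
    nlinarith [h3, mul_nonneg (sub_nonneg.2 h24lo.le) (sub_nonneg.2 hub)]
  rcases le_or_gt m ((26:ℝ)/10) with hub|h26lo
  · have hr : (156131/2000000 : ℝ) ≤ Real.exp (-(0.05 + (25:ℕ)/10)) :=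
      le_trans (by norm_num) (exp_grid 25)
    have ht := tangent_aux (0.05 + (25:ℕ)/10) m (156131/2000000) hr (by norm_num)
    have h3 : (1+m) * ((156131/2000000:ℝ) * (1 + (0.05 + ((25:ℕ):ℝ)/10) - m)) ≤ (1+m) * Real.exp (-m) :=
      mul_le_mul_of_nonneg_left ht (by linarith)
    push_cast at h3
    nlinarith [h3, mul_nonneg (sub_nonneg.2 h25lo.le) (sub_nonneg.2 hub)]
  rcases le_or_gt m ((27:ℝ)/10) with hub|h27lo
  · have hr : (17659/250000 : ℝ) ≤ Real.exp (-(0.05 + (26:ℕ)/10)) :=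
      le_trans (by norm_num) (exp_grid 26)
    have ht := tangent_aux (0.05 + (26:ℕ)/10) m (17659/250000) hr (by norm_num)
    have h3 : (1+m) * ((17659/250000:ℝ) * (1 + (0.05 + ((26:ℕ):ℝ)/10) - m)) ≤ (1+m) * Real.exp (-m) :=
      mul_le_mul_of_nonneg_left ht (by linarith)
    push_cast at h3
    nlinarith [h3, mul_nonneg (sub_nonneg.2 h26lo.le) (sub_nonneg.2 hub)]
  rcases le_or_gt m ((28:ℝ)/10) with hub|h28lo
  · have hr : (19973/312500 : ℝ) ≤ Real.exp (-(0.05 + (27:ℕ)/10)) :=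
      le_trans (by norm_num) (exp_grid 27)
    have ht := tangent_aux (0.05 + (27:ℕ)/10) m (19973/312500) hr (by norm_num)
    have h3 : (1+m) * ((19973/312500:ℝ) * (1 + (0.05 + ((27:ℕ):ℝ)/10) - m)) ≤ (1+m) * Real.exp (-m) :=
      mul_le_mul_of_nonneg_left ht (by linarith)
    push_cast at h3
    nlinarith [h3, mul_nonneg (sub_nonneg.2 h27lo.le) (sub_nonneg.2 hub)]
  rcases le_or_gt m ((29:ℝ)/10) with hub|h29lo
  · have hr : (578309/10000000 : ℝ) ≤ Real.exp (-(0.05 + (28:ℕ)/10)) :=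
      le_trans (by norm_num) (exp_grid 28)
    have ht := tangent_aux (0.05 + (28:ℕ)/10) m (578309/10000000) hr (by norm_num)
    have h3 : (1+m) * ((578309/10000000:ℝ) * (1 + (0.05 + ((28:ℕ):ℝ)/10) - m)) ≤ (1+m) * Real.exp (-m) :=
      mul_le_mul_of_nonneg_left ht (by linarith)
    push_cast at h3
    nlinarith [h3, mul_nonneg (sub_nonneg.2 h28lo.le) (sub_nonneg.2 hub)]
  rcases le_or_gt m ((30:ℝ)/10) with hub|h30lo
  · have hr : (523271/10000000 : ℝ) ≤ Real.exp (-(0.05 + (29:ℕ)/10)) :=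
      le_trans (by norm_num) (exp_grid 29)
    have ht := tangent_aux (0.05 + (29:ℕ)/10) m (523271/10000000) hr (by norm_num)
    have h3 : (1+m) * ((523271/10000000:ℝ) * (1 + (0.05 + ((29:ℕ):ℝ)/10) - m)) ≤ (1+m) * Real.exp (-m) :=
      mul_le_mul_of_nonneg_left ht (by linarith)
    push_cast at h3
    nlinarith [h3, mul_nonneg (sub_nonneg.2 h29lo.le) (sub_nonneg.2 hub)]
  rcases le_or_gt m ((31:ℝ)/10) with hub|h31lo
  · have hr : (3699/78125 : ℝ) ≤ Real.exp (-(0.05 + (30:ℕ)/10)) :=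
      le_trans (by norm_num) (exp_grid 30)
    have ht := tangent_aux (0.05 + (30:ℕ)/10) m (3699/78125) hr (by norm_num)
    have h3 : (1+m) * ((3699/78125:ℝ) * (1 + (0.05 + ((30:ℕ):ℝ)/10) - m)) ≤ (1+m) * Real.exp (-m) :=
      mul_le_mul_of_nonneg_left ht (by linarith)
    push_cast at h3
    nlinarith [h3, mul_nonneg (sub_nonneg.2 h30lo.le) (sub_nonneg.2 hub)]
  rcases le_or_gt m ((32:ℝ)/10) with hub|h32lo
  · have hr : (428411/10000000 : ℝ) ≤ Real.exp (-(0.05 + (31:ℕ)/10)) :=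
      le_trans (by norm_num) (exp_grid 31)
    have ht := tangent_aux (0.05 + (31:ℕ)/10) m (428411/10000000) hr (by norm_num)
    have h3 : (1+m) * ((428411/10000000:ℝ) * (1 + (0.05 + ((31:ℕ):ℝ)/10) - m)) ≤ (1+m) * Real.exp (-m) :=
      mul_le_mul_of_nonneg_left ht (by linarith)
    push_cast at h3
    nlinarith [h3, mul_nonneg (sub_nonneg.2 h31lo.le) (sub_nonneg.2 hub)]
  rcases le_or_gt m ((33:ℝ)/10) with hub|h33lo
  · have hr : (387639/10000000 : ℝ) ≤ Real.exp (-(0.05 + (32:ℕ)/10)) :=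
      le_trans (by norm_num) (exp_grid 32)
    have ht := tangent_aux (0.05 + (32:ℕ)/10) m (387639/10000000) hr (by norm_num)
    have h3 : (1+m) * ((387639/10000000:ℝ) * (1 + (0.05 + ((32:ℕ):ℝ)/10) - m)) ≤ (1+m) * Real.exp (-m) :=
      mul_le_mul_of_nonneg_left ht (by linarith)
    push_cast at h3
    nlinarith [h3, mul_nonneg (sub_nonneg.2 h32lo.le) (sub_nonneg.2 hub)]
  have hr : (87687/2500000 : ℝ) ≤ Real.exp (-(0.05 + (33:ℕ)/10)) :=
    le_trans (by norm_num) (exp_grid 33)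
  have ht := tangent_aux (0.05 + (33:ℕ)/10) m (87687/2500000) hr (by norm_num)
  have h3 : (1+m) * ((87687/2500000:ℝ) * (1 + (0.05 + ((33:ℕ):ℝ)/10) - m)) ≤ (1+m) * Real.exp (-m) :=
    mul_le_mul_of_nonneg_left ht (by linarith)
  push_cast at h3
  nlinarith [h3, mul_nonneg (sub_nonneg.2 h33lo.le) (sub_nonneg.2 h'.le)]

theorem db_over_one_minus_beta_bound (σ δt Δt ΔT : ℝ) (hσ : σ < 0)
    (hδt : 0 < δt) (hδtΔt : δt < Δt) (hΔtΔT : Δt ≤ ΔT) :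
    (betaF σ ΔT Δt - betaF σ ΔT δt) / (1 - betaF σ ΔT Δt) ≤ 0.3 := by
  have hΔt : 0 < Δt := hδt.trans hδtΔt
  have hΔT : 0 < ΔT := lt_of_lt_of_le hΔt hΔtΔT
  have hΔt' : Δt ≠ 0 := ne_of_gt hΔt
  have hδt' : δt ≠ 0 := ne_of_gt hδt
  have hb : 1 < 1 - σ * Δt := by nlinarith
  have hbδ : 1 < 1 - σ * δt := by nlinarith
  set x := betaF σ ΔT Δt with hxdef
  set y := betaF σ ΔT δt with hydef
  have hxpos : 0 < x := Real.rpow_pos_of_pos (by linarith) _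
  have hypos : 0 < y := Real.rpow_pos_of_pos (by linarith) _
  have hexp_neg : -(ΔT / Δt) < 0 := by
    have : 0 < ΔT / Δt := div_pos hΔT hΔt
    linarith
  have hx1 : x < 1 := Real.rpow_lt_one_of_one_lt_of_neg hb hexp_neg
  set m := -(σ * ΔT) with hmdef
  have hm : 0 < m := by
    have : σ * ΔT < 0 := mul_neg_of_neg_of_pos hσ hΔT
    rw [hmdef]; linarith
  -- Bernoulli
  have hBer : 1 + m ≤ (1 - σ * Δt) ^ (ΔT / Δt) := by
    have hs : (-1:ℝ) ≤ -(σ * Δt) := by nlinarith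
    have hp : (1:ℝ) ≤ ΔT / Δt := (one_le_div hΔt).2 hΔtΔT
    have h := one_add_mul_self_le_rpow_one_add hs hp
    have heq : ΔT / Δt * -(σ * Δt) = m := by
      rw [hmdef]; field_simp
    have heq2 : (1 + -(σ * Δt)) = 1 - σ * Δt := by ring
    rw [heq, heq2] at h
    exact h
  have hxm : x * (1 + m) ≤ 1 := by
    have hxe : x = ((1 - σ * Δt) ^ (ΔT / Δt))⁻¹ := by
      rw [hxdef, betaF, Real.rpow_neg (by linarith)]
    have hpow : 0 < (1 - σ * Δt) ^ (ΔT / Δt) := Real.rpow_pos_of_pos (by linarith) _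
    rw [hxe, mul_comm, ← div_eq_mul_inv, div_le_one hpow]
    linarith
  -- y ≥ exp (-m)
  have hym : Real.exp (-m) ≤ y := by
    have hylog : y = Real.exp (Real.log (1 - σ * δt) * -(ΔT / δt)) := by
      rw [hydef, betaF, Real.rpow_def_of_pos (by linarith)]
    rw [hylog]
    apply Real.exp_le_exp.2
    have hlog : Real.log (1 - σ * δt) ≤ -(σ * δt) := by
      have := Real.log_le_sub_one_of_pos (x := 1 - σ * δt) (by linarith)
      linarith
    have hneg : -(ΔT / δt) ≤ 0 := by
      have : 0 < ΔT / δt := div_pos hΔT hδt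
      linarith
    have h2 : -(σ * δt) * -(ΔT / δt) ≤ Real.log (1 - σ * δt) * -(ΔT / δt) :=
      mul_le_mul_of_nonpos_right hlog hneg
    have h3 : -(σ * δt) * -(ΔT / δt) = -m := by
      rw [hmdef]; field_simp
    linarith
  have hkey := key_ineq m hm.le
  have hy2 : 1 - 0.3 * m ≤ (1 + m) * y := by
    calc 1 - 0.3 * m ≤ (1 + m) * Real.exp (-m) := hkey
      _ ≤ (1 + m) * y := mul_le_mul_of_nonneg_left hym (by linarith)
  rw [div_le_iff₀ (by linarith : (0:ℝ) < 1 - x)]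
  nlinarith [hxm, hy2, hm, hxpos, hypos]
end

section
/- For every real k > 0 and every real x with 0 < x ≤ k, one has (1 + x)^(k/x) > k·(2 + x)/(1 + x) − 1. -/
theorem technical_estimate (k x : ℝ) (hk : 0 < k) (hx : 0 < x) (hxk : x ≤ k) :
    (1 + x) ^ (k / x) > k * ((2 + x) / (1 + x)) - 1 := by
  have h1x : (0:ℝ) < 1 + x := by linarith
  have hs : (-1:ℝ) ≤ x := by linarith
  rcases lt_or_ge k (2 + 2*x) with hcase | hcase
  · -- Bernoulli first order
    have hp : 1 ≤ k / x := (one_le_div hx).2 hxk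
    have hb := one_add_mul_self_le_rpow_one_add hs hp
    have hxx : k / x * x = k := div_mul_cancel₀ k hx.ne'
    rw [hxx] at hb
    have h2 : k * ((2+x)/(1+x)) < 1 + k + 1 := by
      rw [mul_div_assoc', div_lt_iff₀ h1x]
      nlinarith
    linarith
  · rcases le_or_gt 1 x with hx1 | hx1
    · -- second-order Bernoulli
      have hp : 1 ≤ k / x - 1 := by
        rw [le_sub_iff_add_le]
        have : 2 * x ≤ k := by linarith
        calc (1:ℝ) + 1 = 2 := by norm_num
        _ ≤ k / x := (le_div_iff₀ hx).2 (by linarith)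
      have hb := one_add_mul_self_le_rpow_one_add hs hp
      have hxx : (k / x - 1) * x = k - x := by
        field_simp
      rw [hxx] at hb
      have hsplit : (1 + x) * (1 + x) ^ (k / x - 1) = (1 + x) ^ (k / x) := by
        rw [Real.rpow_sub h1x, Real.rpow_one]
        field_simp
      have hlow : (1 + x) * (1 + (k - x)) ≤ (1 + x) ^ (k / x) := by
        rw [← hsplit]
        exact mul_le_mul_of_nonneg_left hb h1x.le
      have h2 : k * ((2+x)/(1+x)) < (1 + x) * (1 + (k - x)) + 1 := by
        rw [mul_div_assoc', div_lt_iff₀ h1x]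
        nlinarith [mul_nonneg hk.le (sub_nonneg.2 hx1),
          mul_nonneg (sq_nonneg x) (by linarith : (0:ℝ) ≤ k - x - 2)]
      linarith
    · -- exponential route: LHS ≥ 2^k
      have h2x : (2:ℝ) ^ x ≤ 1 + x := by
        have hconv := convexOn_exp.2 (Set.mem_univ (0:ℝ)) (Set.mem_univ (Real.log 2))
          (by linarith : (0:ℝ) ≤ 1 - x) hx.le (by ring : (1 - x) + x = 1)
        simp only [smul_eq_mul, mul_zero, zero_add, Real.exp_zero] at hconv
        rw [Real.exp_log (by norm_num : (0:ℝ) < 2)] at hconv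
        rw [Real.rpow_def_of_pos (by norm_num : (0:ℝ) < 2)]
        rw [mul_comm] at hconv
        linarith
      have hk2 : (2:ℝ) ^ k ≤ (1 + x) ^ (k / x) := by
        have := Real.rpow_le_rpow (Real.rpow_nonneg (by norm_num) x) h2x
          (le_of_lt (div_pos hk hx))
        rwa [← Real.rpow_mul (by norm_num : (0:ℝ) ≤ 2),
          show x * (k / x) = k from by field_simp] at this
      have hkexp : (4:ℝ) * (1 + (k - 2) * Real.log 2) ≤ (2:ℝ) ^ k := by
        have hsplit : (2:ℝ) ^ k = (2:ℝ) ^ (2:ℝ) * (2:ℝ) ^ (k - 2) := by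
          rw [← Real.rpow_add (by norm_num : (0:ℝ) < 2)]; ring_nf
        have h4 : (2:ℝ) ^ (2:ℝ) = 4 := by
          rw [show (2:ℝ) = ((2:ℕ):ℝ) by norm_num, Real.rpow_natCast]; norm_num
        have hexp : (1 + (k - 2) * Real.log 2) ≤ (2:ℝ) ^ (k - 2) := by
          rw [Real.rpow_def_of_pos (by norm_num : (0:ℝ) < 2), mul_comm]
          nlinarith [Real.add_one_le_exp (Real.log 2 * (k - 2))]
        rw [hsplit, h4]
        nlinarith
      have hrhs : k * ((2+x)/(1+x)) - 1 < 2*k - 1 := by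
        have : (2+x)/(1+x) < 2 := by rw [div_lt_iff₀ h1x]; linarith
        nlinarith
      have hlog : (0.6931471803:ℝ) < Real.log 2 := Real.log_two_gt_d9
      have hk2' : (2:ℝ) < k := by linarith
      nlinarith [mul_lt_mul_of_pos_left hlog (by linarith : (0:ℝ) < k - 2)]
end

section
/- Let σ < 0 and ΔT > 0. Then the function h(τ) := (1 − σ·τ)^(−ΔT/τ) is strictly increasing on (0, ∞), and for every τ with 0 < τ ≤ ΔT one has e^{σ·ΔT} ≤ (1 − σ·τ)^(−ΔT/τ) ≤ 1/(1 − σ·ΔT). -/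
private lemma log_gt_aux {b : ℝ} (hb : 1 < b) : (b - 1) / b < Real.log b := by
  have h0 : 0 < b := by linarith
  have h1 : Real.log (1 / b) < 1 / b - 1 :=
    Real.log_lt_sub_one_of_pos (by positivity) (by
      intro h
      have : b = 1 := by field_simp at h; linarith
      linarith)
  rw [Real.log_div one_ne_zero (ne_of_gt h0), Real.log_one] at h1
  have : (b - 1) / b = 1 - 1 / b := by field_simp
  rw [this]
  linarith

theorem h_monotone_and_bounds (σ ΔT : ℝ) (hσ : σ < 0) (hΔT : 0 < ΔT) :
    StrictMonoOn (fun τ : ℝ => (1 - σ * τ) ^ (-(ΔT / τ))) (Set.Ioi (0 : ℝ)) ∧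
    ∀ τ : ℝ, 0 < τ → τ ≤ ΔT →
      Real.exp (σ * ΔT) ≤ (1 - σ * τ) ^ (-(ΔT / τ)) ∧
      (1 - σ * τ) ^ (-(ΔT / τ)) ≤ 1 / (1 - σ * ΔT) := by
  have hbase : ∀ τ : ℝ, 0 < τ → (1:ℝ) < 1 - σ * τ := by
    intro τ hτ; nlinarith
  set g : ℝ → ℝ := fun τ => (-ΔT) * (Real.log (1 - σ * τ) / τ) with hgdef
  have hgeq : ∀ τ : ℝ, 0 < τ → (1 - σ * τ) ^ (-(ΔT / τ)) = Real.exp (g τ) := by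
    intro τ hτ
    rw [Real.rpow_def_of_pos (by linarith [hbase τ hτ])]
    congr 1
    simp only [hgdef]
    ring
  -- derivative facts
  have hderiv : ∀ τ : ℝ, 0 < τ →
      HasDerivAt g ((-ΔT) * ((-σ / (1 - σ * τ) * τ - Real.log (1 - σ * τ) * 1) / τ ^ 2)) τ := by
    intro τ hτ
    have hb : (1:ℝ) < 1 - σ * τ := hbase τ hτ
    have hu : HasDerivAt (fun x : ℝ => 1 - σ * x) (-σ) τ := by
      simpa using ((hasDerivAt_id τ).const_mul σ).const_sub 1
    have hL : HasDerivAt (fun x : ℝ => Real.log (1 - σ * x)) (-σ / (1 - σ * τ)) τ :=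
      hu.log (by linarith)
    exact (hL.div (hasDerivAt_id τ) (ne_of_gt hτ)).const_mul (-ΔT)
  have hdpos : ∀ τ : ℝ, 0 < τ →
      0 < (-ΔT) * ((-σ / (1 - σ * τ) * τ - Real.log (1 - σ * τ) * 1) / τ ^ 2) := by
    intro τ hτ
    have hb : (1:ℝ) < 1 - σ * τ := hbase τ hτ
    have hbp : (0:ℝ) < 1 - σ * τ := by linarith
    have hkey : ((1 - σ * τ) - 1) / (1 - σ * τ) < Real.log (1 - σ * τ) := log_gt_aux hb
    have h1 : -σ / (1 - σ * τ) * τ = ((1 - σ * τ) - 1) / (1 - σ * τ) := by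
      rw [div_mul_eq_mul_div]
      congr 1
      ring
    have h2 : -σ / (1 - σ * τ) * τ - Real.log (1 - σ * τ) * 1 < 0 := by
      rw [h1]; linarith
    have hτ2 : (0:ℝ) < τ ^ 2 := by positivity
    have := div_neg_of_neg_of_pos h2 hτ2
    nlinarith
  have hgmono : StrictMonoOn g (Set.Ioi (0:ℝ)) := by
    apply strictMonoOn_of_deriv_pos (convex_Ioi 0)
    · intro τ hτ
      exact (hderiv τ hτ).continuousAt.continuousWithinAt
    · intro τ hτ
      rw [interior_Ioi] at hτ
      rw [(hderiv τ hτ).deriv]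
      exact hdpos τ hτ
  have hmono : StrictMonoOn (fun τ : ℝ => (1 - σ * τ) ^ (-(ΔT / τ))) (Set.Ioi (0:ℝ)) := by
    intro a ha b hb hab
    show (1 - σ * a) ^ (-(ΔT / a)) < (1 - σ * b) ^ (-(ΔT / b))
    rw [hgeq a ha, hgeq b hb]
    exact Real.exp_lt_exp.mpr (hgmono ha hb hab)
  refine ⟨hmono, fun τ hτ hτΔ => ?_⟩
  constructor
  · -- lower bound
    rw [hgeq τ hτ]
    apply Real.exp_le_exp.mpr
    have hlog : Real.log (1 - σ * τ) ≤ -σ * τ := by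
      have := Real.log_le_sub_one_of_pos (by linarith [hbase τ hτ] : (0:ℝ) < 1 - σ * τ)
      linarith
    have : Real.log (1 - σ * τ) / τ ≤ -σ := by
      rw [div_le_iff₀ hτ]; linarith
    simp only [hgdef]
    nlinarith
  · -- upper bound
    have hΔmem : ΔT ∈ Set.Ioi (0:ℝ) := hΔT
    have hle : (1 - σ * τ) ^ (-(ΔT / τ)) ≤ (1 - σ * ΔT) ^ (-(ΔT / ΔT)) :=
      hmono.monotoneOn hτ hΔmem hτΔ
    have heq : (1 - σ * ΔT) ^ (-(ΔT / ΔT)) = 1 / (1 - σ * ΔT) := by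
      rw [div_self (ne_of_gt hΔT), Real.rpow_neg_one, one_div]
    linarith [hle, heq ▸ hle]
end

section
/- For every real k > 0, the function f(x) := (1 + (1 + x)^(−k/x))/(2 + x) is strictly decreasing on the interval (0, k]. -/
/-!
With `g x = (1 + x) ^ (-(k / x))` we have
`f = (1 + g) / (2 + x)` and `f'` has the sign of `g' · (2 + x) - (1 + g)`.
Since `g' = k · g · (log (1 + x) - x / (1 + x)) / x²`, the sharp bound
`log (1 + x) < x / (1 + x) + x² / (2 + x)` (a consequence of `y ≤ sinh y` at `y = log (1 + x)`)
gives `g' · (2 + x) < k · g`, and Bernoulli's inequality `(1 + x) ^ (k / x) ≥ 1 + k`, valid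
because `k / x ≥ 1`, gives `k · g ≤ 1 - g < 1 + g`.
-/

open Real Set

variable {x : ℝ}

lemma log_one_add_le (hx : 0 ≤ x) : log (1 + x) ≤ x * (2 + x) / (2 * (1 + x)) := by
  have hx1 : 0 < 1 + x := by linarith
  have hsinh : log (1 + x) ≤ sinh (log (1 + x)) := self_le_sinh_iff.mpr (log_nonneg (by linarith))
  rw [sinh_log hx1] at hsinh
  convert hsinh using 1
  field_simp
  ring

lemma log_one_add_lt (hx : 0 < x) : log (1 + x) < x / (1 + x) + x ^ 2 / (2 + x) := by
  refine (log_one_add_le hx.le).trans_lt ?_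
  rw [div_add_div _ _ (by positivity) (by positivity), div_lt_div_iff₀ (by positivity) (by positivity)]
  nlinarith [pow_pos hx 3]

lemma hasDerivAt_one_add_rpow_neg_div (k : ℝ) (hx : 0 < x) :
    HasDerivAt (fun y => (1 + y) ^ (-(k / y)))
      ((1 + x) ^ (-(k / x)) * (k * (log (1 + x) - x / (1 + x)) / x ^ 2)) x := by
  have hx1 : 0 < 1 + x := by linarith
  have hexp : HasDerivAt (fun y => -(k / y)) (k / x ^ 2) x := by
    simpa [div_eq_mul_inv, Pi.neg_def] using ((hasDerivAt_inv hx.ne').const_mul k).neg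
  refine (((hasDerivAt_id x).const_add 1).rpow hexp hx1).congr_deriv ?_
  simp only [id, rpow_sub_one hx1.ne']
  field_simp
  ring

lemma one_add_rpow_neg_div_mul_le {k : ℝ} (hx : 0 < x) (hxk : x ≤ k) :
    (1 + x) ^ (-(k / x)) * (1 + k) ≤ 1 := by
  have hbernoulli : 1 + k / x * x ≤ (1 + x) ^ (k / x) :=
    one_add_mul_self_le_rpow_one_add (by linarith) ((one_le_div hx).mpr hxk)
  rw [div_mul_cancel₀ k hx.ne'] at hbernoulli
  rw [rpow_neg (by linarith), inv_mul_le_iff₀ (by positivity), mul_one]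
  exact hbernoulli

theorem f_strictly_decreasing (k : ℝ) (hk : 0 < k) :
    StrictAntiOn (fun x : ℝ => (1 + (1 + x) ^ (-(k / x))) / (2 + x))
      (Set.Ioc (0 : ℝ) k) := by
  set g : ℝ → ℝ := fun y => (1 + y) ^ (-(k / y))
  set g' : ℝ → ℝ := fun y => g y * (k * (log (1 + y) - y / (1 + y)) / y ^ 2)
  have hderiv : ∀ x ∈ Ioc 0 k, HasDerivAt (fun y => (1 + g y) / (2 + y))
      ((g' x * (2 + x) - (1 + g x) * 1) / (2 + x) ^ 2) x := fun x hx =>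
    ((hasDerivAt_one_add_rpow_neg_div k hx.1).const_add 1).div
      ((hasDerivAt_id x).const_add 2) (by linarith [hx.1])
  refine strictAntiOn_of_hasDerivWithinAt_neg (convex_Ioc 0 k)
    (fun x hx => (hderiv x hx).continuousAt.continuousWithinAt)
    (fun x hx => (hderiv x (interior_subset hx)).hasDerivWithinAt) fun x hx => ?_
  obtain ⟨hx, hxk⟩ := interior_subset hx
  have hg : 0 < g x := rpow_pos_of_pos (by linarith) _
  have hslope : g' x * (2 + x) < k * g x := by
    have hlog := log_one_add_lt hx
    calc g' x * (2 + x) = k * g x * ((log (1 + x) - x / (1 + x)) * (2 + x) / x ^ 2) := by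
          simp only [g']; ring
      _ < k * g x * 1 := by
          gcongr
          rw [div_lt_one (by positivity), ← lt_div_iff₀ (by positivity)]
          linarith
      _ = k * g x := mul_one _
  have hbernoulli := one_add_rpow_neg_div_mul_le hx hxk
  apply div_neg_of_neg_of_pos _ (by positivity)
  linarith
end

section
/- For every real x > 0, one has (1 − e^{−2x})·(1 + x)² ≤ 0.58·2·x·(2 + x), i.e. (1 − e^{−2x})·(1 + x)²/(2·x·(2 + x)) ≤ 0.58. -/
-- Padé bound: e^{-s} ≥ (2-s)/(2+s) for s ∈ [0,1]
lemma pade_exp_aux (s : ℝ) (h0 : 0 ≤ s) (h1 : s ≤ 1) : 2 - s ≤ (2 + s) * Real.exp (-s) := by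
  have habs : |(-s : ℝ)| ≤ 1 := by rw [abs_neg, abs_of_nonneg h0]; exact h1
  have hb := Real.exp_bound habs (n := 6) (by norm_num)
  have hs : ∑ m ∈ Finset.range 6, (-s) ^ m / (m.factorial : ℝ)
      = 1 - s + s ^ 2 / 2 - s ^ 3 / 6 + s ^ 4 / 24 - s ^ 5 / 120 := by
    simp [Finset.sum_range_succ, Nat.factorial]
    ring
  rw [hs, abs_neg, abs_of_nonneg h0] at hb
  have hb' := abs_le.1 hb
  have hlow : 1 - s + s ^ 2 / 2 - s ^ 3 / 6 + s ^ 4 / 24 - s ^ 5 / 120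
      - s ^ 6 * (7 / (720 * 6)) ≤ Real.exp (-s) := by
    have := hb'.1
    norm_num [Nat.factorial] at this ⊢
    linarith
  nlinarith [hlow, mul_nonneg (mul_nonneg (mul_nonneg h0 h0) h0) (sub_nonneg.2 h1),
    pow_nonneg h0 3, pow_nonneg h0 4, pow_nonneg h0 6,
    mul_nonneg (pow_nonneg h0 3) (sub_nonneg.2 h1)]

lemma qpoly_aux (x : ℝ) (h0 : 0 ≤ x) (h1 : x ≤ 1.7) :
    1.16 * (6 + x) ^ 6 ≤ (1 + x) ^ 2 * ((6 - x) ^ 6 + 0.16 * (6 + x) ^ 6) := by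
  nlinarith [mul_nonneg h0 (sub_nonneg.2 h1), sq_nonneg (x - 1), sq_nonneg x,
    mul_nonneg (mul_nonneg h0 h0) (sub_nonneg.2 h1), sq_nonneg (x*(x-1)),
    mul_nonneg (mul_nonneg (mul_nonneg h0 h0) h0) (sub_nonneg.2 h1),
    pow_nonneg h0 4, pow_nonneg h0 5, pow_nonneg h0 6,
    mul_nonneg (pow_nonneg h0 4) (sub_nonneg.2 h1),
    mul_nonneg (pow_nonneg h0 5) (sub_nonneg.2 h1),
    mul_nonneg (pow_nonneg h0 6) (sub_nonneg.2 h1)]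

theorem exp_estimate_058 (x : ℝ) (hx : 0 < x) :
    (1 - Real.exp (-2 * x)) * (1 + x) ^ 2 ≤ 0.58 * 2 * x * (2 + x) ∧
    (1 - Real.exp (-2 * x)) * (1 + x) ^ 2 / (2 * x * (2 + x)) ≤ 0.58 := by
  have hE : Real.exp (-2 * x) > 0 := Real.exp_pos _
  have main : (1 - Real.exp (-2 * x)) * (1 + x) ^ 2 ≤ 0.58 * 2 * x * (2 + x) := by
    rcases le_or_gt x 1.7 with h17 | h17
    · -- use Padé bound on s = x/3
      have hs0 : (0:ℝ) ≤ x / 3 := by linarith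
      have hs1 : x / 3 ≤ 1 := by linarith
      have hp := pade_exp_aux (x / 3) hs0 hs1
      have hrw : Real.exp (-2 * x) = Real.exp (-(x / 3)) ^ 6 := by
        rw [← Real.exp_nat_mul]; norm_num; ring_nf
      have hA : (2 - x / 3) ^ 6 ≤ ((2 + x / 3) * Real.exp (-(x / 3))) ^ 6 := by
        apply pow_le_pow_left₀ (by linarith) hp
      rw [mul_pow] at hA
      rw [hrw]
      have hq := qpoly_aux x (le_of_lt hx) h17
      have h63 : (2 + x/3) ^ 6 = (6 + x) ^ 6 / 729 := by ring
      have h63' : (2 - x/3) ^ 6 = (6 - x) ^ 6 / 729 := by ring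
      rw [h63, h63'] at hA
      nlinarith [mul_le_mul_of_nonneg_left hA (sq_nonneg (1 + x)), hq,
        mul_pos (pow_pos (Real.exp_pos (-(x/3))) 6) (by positivity : (0:ℝ) < (6+x)^6)]
    · nlinarith [hE, sq_nonneg (1 + x)]
  refine ⟨main, ?_⟩
  rw [div_le_iff₀ (by nlinarith : (0:ℝ) < 2 * x * (2 + x))]
  nlinarith [main]
end

section
/- Let σ be a real number, δt > 0 with 1 − σ·δt ≠ 0, and α ≠ 0. Suppose real sequences (y_n), (λ_n), (c_n) satisfy, for all n, y_{n+1} = (1 − σ·δt)^{−1}·(y_n + δt·c_{n+1}), λ_n = (1 − σ·δt)^{−1}·λ_{n+1}, and α·c_{n+1} = −(1 − σ·δt)^{−1}·λ_{n+1}. Then for all integers 0 ≤ n₁ ≤ n₂: λ_{n₁} = (1 − σ·δt)^{n₁−n₂}·λ_{n₂} and y_{n₂} = (1 − σ·δt)^{n₁−n₂}·y_{n₁} − (δt/α)·(∑_{j=0}^{n₂−n₁−1} (1 − σ·δt)^{2(n₁−n₂+j)})·λ_{n₂}. -/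
theorem condensed_recurrences (σ δt α : ℝ) (hδt : 0 < δt)
    (hne : 1 - σ * δt ≠ 0) (hα : α ≠ 0)
    (y lam c : ℕ → ℝ)
    (hy : ∀ n : ℕ, y (n + 1) = (1 - σ * δt)⁻¹ * (y n + δt * c (n + 1)))
    (hlam : ∀ n : ℕ, lam n = (1 - σ * δt)⁻¹ * lam (n + 1))
    (hc : ∀ n : ℕ, α * c (n + 1) = -((1 - σ * δt)⁻¹ * lam (n + 1))) :
    ∀ n₁ n₂ : ℕ, n₁ ≤ n₂ →
      lam n₁ = (1 - σ * δt) ^ ((n₁ : ℤ) - (n₂ : ℤ)) * lam n₂ ∧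
      y n₂ = (1 - σ * δt) ^ ((n₁ : ℤ) - (n₂ : ℤ)) * y n₁ -
        (δt / α) *
          (∑ j ∈ Finset.range (n₂ - n₁),
            (1 - σ * δt) ^ (2 * ((n₁ : ℤ) - (n₂ : ℤ) + (j : ℤ)))) * lam n₂ := by
  set r : ℝ := 1 - σ * δt with hrdef
  intro n₁ n₂ h
  obtain ⟨k, rfl⟩ := Nat.exists_eq_add_of_le h
  clear h
  induction k with
  | zero => simp
  | succ k ih =>
    obtain ⟨ihl, ihy⟩ := ih
    have h1 : lam (n₁ + k) = r⁻¹ * lam (n₁ + k + 1) := hlam _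
    have hexp : ((n₁ : ℤ) - ((n₁ + (k+1) : ℕ) : ℤ)) = ((n₁ : ℤ) - ((n₁ + k : ℕ) : ℤ)) + (-1) := by
      push_cast; ring
    have hz : r ^ ((n₁ : ℤ) - ((n₁ + (k+1) : ℕ) : ℤ)) =
        r ^ ((n₁ : ℤ) - ((n₁ + k : ℕ) : ℤ)) * r⁻¹ := by
      rw [hexp, zpow_add₀ hne, zpow_neg_one]
    constructor
    · rw [ihl, h1, hz]; ring
    · have hcv : c (n₁ + k + 1) = (-(r⁻¹ * lam (n₁ + k + 1))) / α := by
        rw [← hc (n₁ + k)]; field_simp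
      have hsum : ∑ j ∈ Finset.range (n₁ + (k+1) - n₁),
          r ^ (2 * ((n₁ : ℤ) - ((n₁ + (k+1) : ℕ) : ℤ) + (j : ℤ)))
          = r⁻¹ * r⁻¹ * ((∑ j ∈ Finset.range (n₁ + k - n₁),
              r ^ (2 * ((n₁ : ℤ) - ((n₁ + k : ℕ) : ℤ) + (j : ℤ)))) + 1) := by
        have e1 : n₁ + (k+1) - n₁ = k + 1 := by omega
        have e2 : n₁ + k - n₁ = k := by omega
        rw [e1, e2, Finset.sum_range_succ]
        have hterm : ∀ j ∈ Finset.range k,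
            r ^ (2 * ((n₁ : ℤ) - ((n₁ + (k+1) : ℕ) : ℤ) + (j : ℤ)))
            = r⁻¹ * r⁻¹ * r ^ (2 * ((n₁ : ℤ) - ((n₁ + k : ℕ) : ℤ) + (j : ℤ))) := by
          intro j _
          rw [← zpow_neg_one, ← zpow_add₀ hne, ← zpow_add₀ hne]
          congr 1; push_cast; ring
        rw [Finset.sum_congr rfl hterm, ← Finset.mul_sum]
        have hlast : r ^ (2 * ((n₁ : ℤ) - ((n₁ + (k+1) : ℕ) : ℤ) + (k : ℤ))) = r⁻¹ * r⁻¹ := by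
          rw [← zpow_neg_one, ← zpow_add₀ hne]
          congr 1; push_cast; ring
        rw [hlast]; ring
      have hyy : y (n₁ + (k+1)) = r⁻¹ * (y (n₁ + k) + δt * c (n₁ + k + 1)) := hy _
      rw [hyy, hcv, ihy, h1, hz, hsum]
      set S := ∑ j ∈ Finset.range (n₁ + k - n₁),
        r ^ (2 * ((n₁ : ℤ) - ((n₁ + k : ℕ) : ℤ) + (j : ℤ))) with hS
      field_simp
      ring
end

section
/- Let σ < 0, 0 < δt < Δt ≤ ΔT, α > 0, L ≥ 1, and set C := β + γ·δβ/|δγ| and Q(a) := α·δβ/|δγ| + (C − a)·∑_{ℓ=0}^{L−1} a^{2ℓ} for real a. If a* is a real number with C < a* < 1 and Q(a*) = 0, then (1 − (a*)²)·α·δβ + |δγ|·(C − a*) < 0, and consequently a* > (−|δγ| + √(|δγ|² + 4·α·δβ·(α·δβ + C·|δγ|)))/(2·α·δβ). -/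
/-- `C = β + γ δβ / |δγ|`. -/
noncomputable def Cconst (σ δt Δt ΔT : ℝ) : ℝ :=
  betaF σ ΔT Δt +
    gammaF σ ΔT Δt * (betaF σ ΔT Δt - betaF σ ΔT δt) /
      |gammaF σ ΔT Δt - gammaF σ ΔT δt|

/-- `Q(a) = α δβ / |δγ| + (C - a) ∑_{ℓ=0}^{L-1} a^{2ℓ}`. -/
noncomputable def Qpoly (σ δt Δt ΔT α : ℝ) (L : ℕ) (a : ℝ) : ℝ :=
  α * (betaF σ ΔT Δt - betaF σ ΔT δt) / |gammaF σ ΔT Δt - gammaF σ ΔT δt| +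
    (Cconst σ δt Δt ΔT - a) * ∑ ℓ ∈ Finset.range L, a ^ (2 * ℓ)

set_option maxHeartbeats 1000000 in
private theorem astar_lower_bound_aux (σ δt Δt ΔT α : ℝ) (L : ℕ) (hσ : σ < 0)
    (hδt : 0 < δt) (hδtΔt : δt < Δt) (hΔtΔT : Δt ≤ ΔT) (hα : 0 < α) (hL : 1 ≤ L)
    (astar : ℝ) (hC : Cconst σ δt Δt ΔT < astar) (h1 : astar < 1)
    (hroot : Qpoly σ δt Δt ΔT α L astar = 0) :
    (1 - astar ^ 2) * α * (betaF σ ΔT Δt - betaF σ ΔT δt) +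
        |gammaF σ ΔT Δt - gammaF σ ΔT δt| * (Cconst σ δt Δt ΔT - astar) < 0 ∧
    astar >
      (-|gammaF σ ΔT Δt - gammaF σ ΔT δt| +
          Real.sqrt (|gammaF σ ΔT Δt - gammaF σ ΔT δt| ^ 2 +
            4 * α * (betaF σ ΔT Δt - betaF σ ΔT δt) *
              (α * (betaF σ ΔT Δt - betaF σ ΔT δt) +
                Cconst σ δt Δt ΔT * |gammaF σ ΔT Δt - gammaF σ ΔT δt|))) /
        (2 * α * (betaF σ ΔT Δt - betaF σ ΔT δt)) := by
  set b := betaF σ ΔT δt with hb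
  set B := betaF σ ΔT Δt with hB
  set g := gammaF σ ΔT δt with hg
  set G := gammaF σ ΔT Δt with hG
  set D := |G - g| with hD
  set C := Cconst σ δt Δt ΔT with hCdef
  set S := ∑ ℓ ∈ Finset.range L, astar ^ (2 * ℓ) with hS
  have hΔt : 0 < Δt := hδt.trans hδtΔt
  have hB0 : 0 < B := Real.rpow_pos_of_pos (by nlinarith) _
  have hB1 : B < 1 := by
    apply Real.rpow_lt_one_of_one_lt_of_neg (by nlinarith)
    have : 0 < ΔT / Δt := div_pos (by linarith) hΔt
    linarith
  have hG0 : 0 < G := by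
    rw [hG, gammaF]
    rw [div_pos_iff]
    right
    constructor
    · rw [← hB]; nlinarith
    · have h2 : 0 < σ * σ * Δt := mul_pos (mul_pos_of_neg_of_neg hσ hσ) hΔt
      nlinarith
  have hS1 : 1 ≤ S := by
    have h0 : (astar : ℝ) ^ (2 * 0) ≤ S :=
      Finset.single_le_sum (f := fun ℓ => astar ^ (2 * ℓ))
        (fun i _ => by simpa [pow_mul] using pow_nonneg (sq_nonneg astar) i)
        (Finset.mem_range.mpr (by omega))
    simpa using h0
  have hDne : D ≠ 0 := by
    intro h
    rw [Qpoly] at hroot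
    rw [← hb, ← hB, ← hg, ← hG, ← hD, ← hCdef, ← hS, h, div_zero, zero_add] at hroot
    nlinarith
  have hD0 : 0 < D := (abs_nonneg _).lt_of_ne' hDne
  have hroot' : α * (B - b) = D * (astar - C) * S := by
    rw [Qpoly] at hroot
    rw [← hb, ← hB, ← hg, ← hG, ← hD, ← hCdef, ← hS] at hroot
    have := (div_eq_iff hDne).mp (by linarith : α * (B - b) / D = (astar - C) * S)
    linarith [this]
  have hδβ : 0 < B - b := by
    have h1 : 0 < D * (astar - C) * S := by
      have h2 : 0 < astar - C := by linarith
      exact mul_pos (mul_pos hD0 h2) (by linarith)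
    nlinarith
  have hC0 : 0 < C := by
    rw [hCdef, Cconst, ← hb, ← hB, ← hG, ← hg, ← hD]
    have : 0 < G * (B - b) / D := div_pos (mul_pos hG0 hδβ) hD0
    linarith
  have ha0 : 0 < astar := hC0.trans hC
  have hgeom : (1 - astar ^ 2) * S = 1 - (astar ^ 2) ^ L := by
    have := geom_sum_mul (astar ^ 2) L
    have hSx : S = ∑ ℓ ∈ Finset.range L, (astar ^ 2) ^ ℓ := by
      rw [hS]
      exact Finset.sum_congr rfl fun i _ => by rw [pow_mul]
    rw [hSx]
    nlinarith [this]
  have hxL : 0 < (astar ^ 2) ^ L := pow_pos (by positivity) L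
  have part1 : (1 - astar ^ 2) * α * (B - b) + D * (C - astar) < 0 := by
    have e1 : (1 - astar ^ 2) * α * (B - b) + D * (C - astar)
        = -(D * (astar - C) * (astar ^ 2) ^ L) := by
      have h2 : (1 - astar ^ 2) * S = 1 - (astar ^ 2) ^ L := hgeom
      linear_combination (1 - astar ^ 2) * hroot' + D * (astar - C) * h2
    rw [e1]
    have : 0 < D * (astar - C) * (astar ^ 2) ^ L := by
      have : 0 < astar - C := by linarith
      positivity
    linarith
  clear_value b B g G D C S
  clear hroot hroot' hgeom hS1 hxL
  refine ⟨part1, ?_⟩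
  set A := α * (B - b) with hA
  clear_value A
  have hA0 : 0 < A := by rw [hA]; exact mul_pos hα hδβ
  have hp : A + C * D < A * astar ^ 2 + D * astar := by
    have e : (1 - astar ^ 2) * α * (B - b) + D * (C - astar)
        = (A + C * D) - (A * astar ^ 2 + D * astar) := by rw [hA]; ring
    linarith [part1, e.symm.trans_lt part1]
  have h2A : 0 < 2 * A * astar + D := by positivity
  have hsqrt : Real.sqrt (D ^ 2 + 4 * α * (B - b) * (A + C * D)) < 2 * A * astar + D := by
    rw [Real.sqrt_lt' h2A]
    have e2 : 4 * α * (B - b) * (A + C * D) = 4 * A * (A + C * D) := by rw [hA]; ring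
    have h3 : 0 < A * (A * astar ^ 2 + D * astar - (A + C * D)) :=
      mul_pos hA0 (by linarith)
    nlinarith [e2, h3]
  rw [gt_iff_lt, div_lt_iff₀ (by positivity : (0:ℝ) < 2 * α * (B - b))]
  have e3 : astar * (2 * α * (B - b)) = 2 * A * astar := by rw [hA]; ring
  linarith [hsqrt, e3]

theorem astar_lower_bound (σ δt Δt ΔT α : ℝ) (L : ℕ) (hσ : σ < 0)
    (hδt : 0 < δt) (hδtΔt : δt < Δt) (hΔtΔT : Δt ≤ ΔT) (hα : 0 < α) (hL : 1 ≤ L)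
    (astar : ℝ) (hC : Cconst σ δt Δt ΔT < astar) (h1 : astar < 1)
    (hroot : Qpoly σ δt Δt ΔT α L astar = 0) :
    (1 - astar ^ 2) * α * (betaF σ ΔT Δt - betaF σ ΔT δt) +
        |gammaF σ ΔT Δt - gammaF σ ΔT δt| * (Cconst σ δt Δt ΔT - astar) < 0 ∧
    astar >
      (-|gammaF σ ΔT Δt - gammaF σ ΔT δt| +
          Real.sqrt (|gammaF σ ΔT Δt - gammaF σ ΔT δt| ^ 2 +
            4 * α * (betaF σ ΔT Δt - betaF σ ΔT δt) *
              (α * (betaF σ ΔT Δt - betaF σ ΔT δt) +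
                Cconst σ δt Δt ΔT * |gammaF σ ΔT Δt - gammaF σ ΔT δt|))) /
        (2 * α * (betaF σ ΔT Δt - betaF σ ΔT δt)) :=
  astar_lower_bound_aux σ δt Δt ΔT α L hσ hδt hδtΔt hΔtΔT hα hL astar hC h1 hroot
end
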